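/- Let X ~ N(0,T), T > 0, σ > 0, f(x) = exp((μ-σ²/2)T + σx), and suppose μ, ρ ∈ ℝ. Then E[max(e^{ρT}, f(X))] > max(e^{ρT}, e^{μT}) unless Pr{f(X) > e^{ρT}} ∈ {0,1}; in particular, since 0 < Pr{f(X) > e^{ρT}} < 1 always holds, E[max(e^{ρT}, f(X))] > max(e^{ρT}, E[f(X)]) = max(e^{ρT}, e^{μT}). -/

import Mathlib

/-!
Write `a = exp (ρ T)`. Pointwise `max a f ≥ a` and `max a f ≥ f`, strictly on `{f > a}` and on
`{f < a}` respectively. As `f` is the exponential of an increasing affine function, these events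
are half-lines `{x > c}` and `{x < c}`, which both have positive Gaussian probability. Integrating,
`E[max a f(X)]` exceeds both `a` and `E[f(X)]`, and the latter equals `exp (μ T)` by the Gaussian
moment generating function.
-/

open MeasureTheory ProbabilityTheory Real

section StrictIntegralInequality

variable {Ω : Type*} [MeasurableSpace Ω] {μ : Measure Ω}

theorem integral_lt_integral_of_ae_le_of_measure_setOfPred_lt_ne_zero {f g : Ω → ℝ}
    (hf : Integrable f μ) (hg : Integrable g μ) (hle : f ≤ᵐ[μ] g)
    (hlt : μ {x | f x < g x} ≠ 0) : ∫ x, f x ∂μ < ∫ x, g x ∂μ := by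
  rw [← sub_pos, ← integral_sub hg hf,
    integral_pos_iff_support_of_nonneg_ae (hle.mono fun x => sub_nonneg.2) (hg.sub hf)]
  refine pos_iff_ne_zero.2 (mt (measure_mono_null ?_) hlt)
  exact fun x hx => (sub_pos.2 hx.out).ne'

theorem max_lt_integral_max [IsProbabilityMeasure μ] {g : Ω → ℝ} {a : ℝ} (hg : Integrable g μ)
    (hgt : μ {x | a < g x} ≠ 0) (hlt : μ {x | g x < a} ≠ 0) :
    max a (∫ x, g x ∂μ) < ∫ x, max a (g x) ∂μ := by
  have hmax : Integrable (fun x => max a (g x)) μ := (integrable_const a).sup hg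
  refine max_lt ?_ ?_
  · calc a = ∫ _, a ∂μ := by simp
      _ < ∫ x, max a (g x) ∂μ :=
        integral_lt_integral_of_ae_le_of_measure_setOfPred_lt_ne_zero (integrable_const a) hmax
          (ae_of_all _ fun x => le_max_left _ _) (by simpa [lt_max_iff] using hgt)
  · exact integral_lt_integral_of_ae_le_of_measure_setOfPred_lt_ne_zero hg hmax
      (ae_of_all _ fun x => le_max_right _ _) (by simpa [lt_max_iff] using hlt)

theorem probReal_lt_one_of_measure_compl_ne_zero [IsProbabilityMeasure μ] {s : Set Ω}
    (hs : MeasurableSet s) (h : μ sᶜ ≠ 0) : μ.real s < 1 := by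
  have hcompl : 0 < μ.real sᶜ := ENNReal.toReal_pos h (measure_ne_top μ _)
  linarith [probReal_compl_eq_one_sub (μ := μ) hs]

end StrictIntegralInequality

section Gaussian

variable (m : ℝ) {v : NNReal}

theorem isOpenPosMeasure_gaussianReal (hv : v ≠ 0) : (gaussianReal m v).IsOpenPosMeasure :=
  (gaussianReal_absolutelyContinuous' m hv).isOpenPosMeasure

variable (v)

theorem integrable_exp_add_mul_gaussianReal (b s : ℝ) :
    Integrable (fun x => exp (b + s * x)) (gaussianReal m v) := by
  simpa only [exp_add] using (integrable_exp_mul_gaussianReal (μ := m) (v := v) s).const_mul (exp b)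

theorem integral_exp_add_mul_gaussianReal (b s : ℝ) :
    ∫ x, exp (b + s * x) ∂gaussianReal m v = exp (b + m * s + v * s ^ 2 / 2) := by
  have hmgf := congrFun (mgf_id_gaussianReal (μ := m) (v := v)) s
  simp only [mgf, id] at hmgf
  simp only [exp_add, integral_const_mul, hmgf, mul_assoc]

end Gaussian

theorem setOf_exp_lt_exp_add_mul {σ : ℝ} (hσ : 0 < σ) (p q : ℝ) :
    {x | exp p < exp (q + σ * x)} = Set.Ioi ((p - q) / σ) := by
  ext x
  simp only [Set.mem_ofPred_eq, Set.mem_Ioi, exp_lt_exp, div_lt_iff₀ hσ]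
  constructor <;> intro h <;> linarith

theorem setOf_exp_add_mul_lt_exp {σ : ℝ} (hσ : 0 < σ) (p q : ℝ) :
    {x | exp (q + σ * x) < exp p} = Set.Iio ((p - q) / σ) := by
  ext x
  simp only [Set.mem_ofPred_eq, Set.mem_Iio, exp_lt_exp, lt_div_iff₀ hσ]
  constructor <;> intro h <;> linarith

theorem insider_beats_honest (T σ ρ μ : ℝ) (hT : 0 < T) (hσ : 0 < σ)
    (f : ℝ → ℝ) (hf : ∀ x, f x = Real.exp ((μ - σ ^ 2 / 2) * T + σ * x)) :
    0 < ((gaussianReal 0 T.toNNReal) {x | Real.exp (ρ * T) < f x}).toReal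
    ∧ ((gaussianReal 0 T.toNNReal) {x | Real.exp (ρ * T) < f x}).toReal < 1
    ∧ (∫ x, f x ∂(gaussianReal 0 T.toNNReal)) = Real.exp (μ * T)
    ∧ (∫ x, max (Real.exp (ρ * T)) (f x) ∂(gaussianReal 0 T.toNNReal))
        > max (Real.exp (ρ * T)) (Real.exp (μ * T)) := by
  obtain rfl : f = fun x => exp ((μ - σ ^ 2 / 2) * T + σ * x) := funext hf
  have := isOpenPosMeasure_gaussianReal 0 (v := T.toNNReal) (by simpa using hT)
  have hmean : ∫ x, exp ((μ - σ ^ 2 / 2) * T + σ * x) ∂gaussianReal 0 T.toNNReal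
      = exp (μ * T) := by
    rw [integral_exp_add_mul_gaussianReal, Real.coe_toNNReal T hT.le]
    ring_nf
  have habove := setOf_exp_lt_exp_add_mul hσ (ρ * T) ((μ - σ ^ 2 / 2) * T)
  have hbelow := setOf_exp_add_mul_lt_exp hσ (ρ * T) ((μ - σ ^ 2 / 2) * T)
  refine ⟨?_, ?_, hmean, ?_⟩
  · rw [habove]
    exact ENNReal.toReal_pos (Measure.measure_Ioi_pos _ _).ne' (measure_ne_top _ _)
  · rw [habove]
    refine probReal_lt_one_of_measure_compl_ne_zero measurableSet_Ioi ?_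
    rw [Set.compl_Ioi]
    exact ((Measure.measure_Iio_pos _ _).trans_le (measure_mono Set.Iio_subset_Iic_self)).ne'
  · rw [gt_iff_lt, ← hmean]
    refine max_lt_integral_max (integrable_exp_add_mul_gaussianReal 0 _ _ _) ?_ ?_
    · rw [habove]; exact (Measure.measure_Ioi_pos _ _).ne'
    · rw [hbelow]; exact (Measure.measure_Iio_pos _ _).ne'
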